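/- arXiv:1205.4837 — 3 statements merged into one kernel-verified Lean document; each statement's English description precedes it below -/
import Mathlib

section
/- Let f be a φ_{h,m}-convex function on [0,b]. If f is increasing (monotone nondecreasing) and φ is m-convex, i.e. φ(tx + m(1−t)y) ≤ tφ(x) + m(1−t)φ(y) for all x, y ∈ [0,b] and t ∈ (0,1), then the composition f ∘ φ is an (h,m)-convex function on [0,b], i.e. (f∘φ)(tx + m(1−t)y) ≤ h(t)(f∘φ)(x) + m·h(1−t)·(f∘φ)(y) for all x, y ∈ [0,b] and t ∈ (0,1). -/
open MeasureTheory Set intervalIntegral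

/-- A nonnegative function `f` on `[0,b]` is `φ_{h,m}`-convex if
`f (t·φ(x) + m·(1−t)·φ(y)) ≤ h(t)·f(φ(x)) + m·h(1−t)·f(φ(y))`
for all `x, y ∈ [0,b]` and `t ∈ (0,1)`. -/
def PhiHMConvex (b m : ℝ) (h φ f : ℝ → ℝ) : Prop :=
  (∀ x ∈ Set.Icc (0 : ℝ) b, 0 ≤ f x) ∧
  ∀ x ∈ Set.Icc (0 : ℝ) b, ∀ y ∈ Set.Icc (0 : ℝ) b, ∀ t ∈ Set.Ioo (0 : ℝ) 1,
    f (t * φ x + m * (1 - t) * φ y) ≤ h t * f (φ x) + m * h (1 - t) * f (φ y)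

theorem comp_phiHMConvex_of_monotone (b m : ℝ) (h φ f : ℝ → ℝ)
    (hb : 0 < b) (hm : m ∈ Set.Ioc (0 : ℝ) 1)
    (hh : ∀ t ∈ Set.Ioo (0 : ℝ) 1, 0 ≤ h t) (hh0 : h ≠ 0)
    (hφ : ∀ x ∈ Set.Icc (0 : ℝ) b, φ x ∈ Set.Icc (0 : ℝ) b)
    (hf : PhiHMConvex b m h φ f)
    (hmono : MonotoneOn f (Set.Icc (0 : ℝ) b))
    (hφconv : ∀ x ∈ Set.Icc (0 : ℝ) b, ∀ y ∈ Set.Icc (0 : ℝ) b, ∀ t ∈ Set.Ioo (0 : ℝ) 1,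
      φ (t * x + m * (1 - t) * y) ≤ t * φ x + m * (1 - t) * φ y) :
    ∀ x ∈ Set.Icc (0 : ℝ) b, ∀ y ∈ Set.Icc (0 : ℝ) b, ∀ t ∈ Set.Ioo (0 : ℝ) 1,
      (f ∘ φ) (t * x + m * (1 - t) * y) ≤ h t * (f ∘ φ) x + m * h (1 - t) * (f ∘ φ) y := by
  intro x hx y hy t ht
  obtain ⟨hm0, hm1⟩ := hm
  obtain ⟨ht0, ht1⟩ := ht
  have hmix : ∀ u ∈ Set.Icc (0 : ℝ) b, ∀ v ∈ Set.Icc (0 : ℝ) b,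
      t * u + m * (1 - t) * v ∈ Set.Icc (0 : ℝ) b := by
    intro u hu v hv
    constructor
    · have h1t : (0:ℝ) ≤ 1 - t := by linarith
      have := mul_nonneg ht0.le hu.1
      have := mul_nonneg (mul_nonneg hm0.le h1t) hv.1
      linarith
    · have h1t : (0:ℝ) ≤ 1 - t := by linarith
      have h1 : t * u ≤ t * b := mul_le_mul_of_nonneg_left hu.2 ht0.le
      have h2 : m * (1 - t) * v ≤ m * (1 - t) * b :=
        mul_le_mul_of_nonneg_left hv.2 (mul_nonneg hm0.le h1t)
      have h3 : m * (1 - t) * b ≤ (1 - t) * b := by nlinarith [mul_nonneg (mul_nonneg (sub_nonneg.mpr hm1) h1t) hb.le]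
      nlinarith
  have hmem : t * x + m * (1 - t) * y ∈ Set.Icc (0 : ℝ) b := hmix x hx y hy
  have hmem2 : t * φ x + m * (1 - t) * φ y ∈ Set.Icc (0 : ℝ) b :=
    hmix (φ x) (hφ x hx) (φ y) (hφ y hy)
  have h1 : f (φ (t * x + m * (1 - t) * y)) ≤ f (t * φ x + m * (1 - t) * φ y) :=
    hmono (hφ _ hmem) hmem2 (hφconv x hx y hy t ⟨ht0, ht1⟩)
  have h2 := hf.2 x hx y hy t ⟨ht0, ht1⟩
  exact le_trans h1 h2
end

section
/- Let f be a φ_{h,m}-convex function on [0,b] with m ∈ (0,1], and let x, y ∈ [0,b] be such that φ(x) < mφ(y). Assume that h is Lebesgue integrable on (0,1) and that f is Lebesgue integrable on [φ(x), mφ(y)]. Then (1/(mφ(y) − φ(x))) ∫_{φ(x)}^{mφ(y)} f(u) du ≤ [f(φ(x)) + f(φ(y))]·∫₀¹ h(t) dt. -/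
open MeasureTheory Set intervalIntegral

/-! The substitution `u = t φ(x) + (1 - t) m φ(y)` turns the mean of `f` over `[φ(x), m φ(y)]`
into `∫₀¹ f (t φ(x) + m (1 - t) φ(y)) dt`. Integrating the defining inequality of
`φ_{h,m}`-convexity over `t ∈ (0,1)`, bounding `m ≤ 1`, and using `∫₀¹ h (1 - t) dt = ∫₀¹ h`
gives the bound. -/

theorem IntervalIntegrable.comp_mul_add_one_sub_mul {f : ℝ → ℝ} {a b : ℝ}
    (hf : IntervalIntegrable f volume a b) :
    IntervalIntegrable (fun t => f (t * a + (1 - t) * b)) volume 0 1 := by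
  have hcomb (t : ℝ) : t * a + (1 - t) * b = (a - b) * t + b := by ring
  simp only [hcomb]
  rcases eq_or_ne a b with rfl | hab
  · simp
  simpa [sub_ne_zero.mpr hab] using ((hf.comp_add_right b).comp_mul_left (c := a - b)).symm

theorem intervalIntegral.integral_comp_mul_add_one_sub_mul (f : ℝ → ℝ) {a b : ℝ}
    (hab : a ≠ b) :
    ∫ t in (0 : ℝ)..1, f (t * a + (1 - t) * b) = 1 / (b - a) * ∫ u in a..b, f u := by
  have hcomb (t : ℝ) : t * a + (1 - t) * b = (a - b) * t + b := by ring
  simp only [hcomb]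
  rw [integral_comp_mul_add f (sub_ne_zero.mpr hab), integral_symm, smul_eq_mul,
    mul_zero, zero_add, mul_one, sub_add_cancel, one_div, ← neg_sub b a, inv_neg, neg_mul_neg]

theorem intervalIntegral.integral_comp_one_sub (f : ℝ → ℝ) :
    ∫ t in (0 : ℝ)..1, f (1 - t) = ∫ t in (0 : ℝ)..1, f t := by
  simp

theorem IntervalIntegrable.comp_one_sub {f : ℝ → ℝ} (hf : IntervalIntegrable f volume 0 1) :
    IntervalIntegrable (fun t => f (1 - t)) volume 0 1 := by
  simpa using (hf.comp_sub_left 1).symm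

namespace PhiHMConvex

variable {b m : ℝ} {h φ f : ℝ → ℝ}

theorem apply_le (hf : PhiHMConvex b m h φ f) (hm : m ≤ 1)
    (hh : ∀ t ∈ Ioo (0 : ℝ) 1, 0 ≤ h t) {x y : ℝ} (hx : x ∈ Icc 0 b) (hy : y ∈ Icc 0 b)
    (hφy : φ y ∈ Icc 0 b) {t : ℝ} (ht : t ∈ Ioo 0 1) :
    f (t * φ x + (1 - t) * (m * φ y)) ≤ f (φ x) * h t + f (φ y) * h (1 - t) := by
  have hh' : 0 ≤ h (1 - t) * f (φ y) :=
    mul_nonneg (hh _ ⟨by linarith [ht.2], by linarith [ht.1]⟩) (hf.1 _ hφy)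
  calc f (t * φ x + (1 - t) * (m * φ y))
      = f (t * φ x + m * (1 - t) * φ y) := by ring_nf
    _ ≤ h t * f (φ x) + m * (h (1 - t) * f (φ y)) := by
        simpa only [mul_assoc] using hf.2 x hx y hy t ht
    _ ≤ h t * f (φ x) + h (1 - t) * f (φ y) := by
        have := mul_le_of_le_one_left hh' hm
        linarith
    _ = f (φ x) * h t + f (φ y) * h (1 - t) := by ring

end PhiHMConvex

theorem phiHMConvex_hadamard_right_general (b m : ℝ) (h φ f : ℝ → ℝ)
    (hm : m ∈ Set.Ioc (0 : ℝ) 1)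
    (hh : ∀ t ∈ Set.Ioo (0 : ℝ) 1, 0 ≤ h t)
    (hφ : ∀ x ∈ Set.Icc (0 : ℝ) b, φ x ∈ Set.Icc (0 : ℝ) b)
    (hf : PhiHMConvex b m h φ f)
    (x : ℝ) (hx : x ∈ Set.Icc (0 : ℝ) b) (y : ℝ) (hy : y ∈ Set.Icc (0 : ℝ) b)
    (hxy : φ x < m * φ y)
    (hinth : IntervalIntegrable h volume 0 1)
    (hintf : IntervalIntegrable f volume (φ x) (m * φ y)) :
    (1 / (m * φ y - φ x)) * ∫ u in (φ x)..(m * φ y), f u ≤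
      (f (φ x) + f (φ y)) * ∫ t in (0 : ℝ)..1, h t := by
  rw [← integral_comp_mul_add_one_sub_mul f hxy.ne]
  calc ∫ t in (0 : ℝ)..1, f (t * φ x + (1 - t) * (m * φ y))
      ≤ ∫ t in (0 : ℝ)..1, f (φ x) * h t + f (φ y) * h (1 - t) :=
        integral_mono_on_of_le_Ioo zero_le_one hintf.comp_mul_add_one_sub_mul
          ((hinth.const_mul _).add (hinth.comp_one_sub.const_mul _))
          fun t ht => hf.apply_le hm.2 hh hx hy (hφ y hy) ht
    _ = (f (φ x) + f (φ y)) * ∫ t in (0 : ℝ)..1, h t := by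
        rw [integral_add (hinth.const_mul _) (hinth.comp_one_sub.const_mul _),
          intervalIntegral.integral_const_mul, intervalIntegral.integral_const_mul,
          integral_comp_one_sub]
        ring

theorem phiHMConvex_hadamard_right (b m : ℝ) (h φ f : ℝ → ℝ)
    (hb : 0 < b) (hm : m ∈ Set.Ioc (0 : ℝ) 1)
    (hh : ∀ t ∈ Set.Ioo (0 : ℝ) 1, 0 ≤ h t) (hh0 : h ≠ 0)
    (hφ : ∀ x ∈ Set.Icc (0 : ℝ) b, φ x ∈ Set.Icc (0 : ℝ) b)
    (hf : PhiHMConvex b m h φ f)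
    (x : ℝ) (hx : x ∈ Set.Icc (0 : ℝ) b) (y : ℝ) (hy : y ∈ Set.Icc (0 : ℝ) b)
    (hxy : φ x < m * φ y)
    (hinth : IntervalIntegrable h volume 0 1)
    (hintf : IntervalIntegrable f volume (φ x) (m * φ y)) :
    (1 / (m * φ y - φ x)) * ∫ u in (φ x)..(m * φ y), f u ≤
      (f (φ x) + f (φ y)) * ∫ t in (0 : ℝ)..1, h t :=
  phiHMConvex_hadamard_right_general b m h φ f hm hh hφ hf x hx y hy hxy hinth hintf
end

section
/- Let f be a φ_{h,m}-convex function on [0,b] with m ∈ (0,1], and let x, y ∈ [0,b] be such that 0 ≤ mφ(x) ≤ φ(x) ≤ mφ(y) < φ(y). Assume h is Lebesgue integrable on (0,1), that strict inequalities mφ(x) < φ(y) and φ(x) < mφ(y) hold, and that f is Lebesgue integrable on [mφ(x), φ(y)]. Then (1/(m+1))·[ (1/(φ(y) − mφ(x))) ∫_{mφ(x)}^{φ(y)} f(u) du + (1/(mφ(y) − φ(x))) ∫_{φ(x)}^{mφ(y)} f(u) du ] ≤ [f(φ(x)) + f(φ(y))]·∫₀¹ h(t) dt. -/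
open MeasureTheory Set intervalIntegral

/-!
Substituting `u = (φ y - m φ x) t + m φ x` turns the mean of `f` over `[m φ x, φ y]` into
`∫₀¹ f (t φ y + m (1 - t) φ x) dt`, which the defining inequality bounds by
`(f (φ y) + m f (φ x)) ∫₀¹ h`, since `t ↦ 1 - t` preserves `∫₀¹ h`. Adding this bound to the one
with `x` and `y` exchanged gives `(m + 1) (f (φ x) + f (φ y)) ∫₀¹ h` on the right.
-/

theorem IntervalIntegrable.comp_mul_add {E : Type*} [NormedAddCommGroup E] {f : ℝ → E}
    {a b c d : ℝ} (hc : c ≠ 0) (hf : IntervalIntegrable f volume (c * a + d) (c * b + d)) :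
    IntervalIntegrable (fun t => f (c * t + d)) volume a b := by
  have hshift : IntervalIntegrable (fun u => f (u + d)) volume (c * a) (c * b) := by
    simpa using hf.comp_add_right d
  simpa [mul_div_cancel_left₀ _ hc] using hshift.comp_mul_left (c := c)

theorem intervalIntegral.integral_comp_one_sub_unitInterval (h : ℝ → ℝ) :
    ∫ t in (0 : ℝ)..1, h (1 - t) = ∫ t in (0 : ℝ)..1, h t := by
  simp [integral_comp_sub_left h (1 : ℝ) (a := 0) (b := 1)]

theorem IntervalIntegrable.comp_one_sub_unitInterval {h : ℝ → ℝ}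
    (hh : IntervalIntegrable h volume 0 1) :
    IntervalIntegrable (fun t => h (1 - t)) volume 0 1 := by
  simpa using (hh.comp_sub_left 1).symm

theorem integral_mul_add_mul_comp_one_sub {h : ℝ → ℝ} (hh : IntervalIntegrable h volume 0 1)
    (m p q : ℝ) :
    ∫ t in (0 : ℝ)..1, (h t * p + m * h (1 - t) * q) = (p + m * q) * ∫ t in (0 : ℝ)..1, h t := by
  have hrev := (hh.comp_one_sub_unitInterval.const_mul m).mul_const q
  rw [integral_add (hh.mul_const p) hrev, intervalIntegral.integral_mul_const,
    intervalIntegral.integral_mul_const, intervalIntegral.integral_const_mul,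
    integral_comp_one_sub_unitInterval]
  ring

theorem PhiHMConvex.inv_mul_integral_le {b m : ℝ} {h φ f : ℝ → ℝ} (hf : PhiHMConvex b m h φ f)
    {x y : ℝ} (hx : x ∈ Icc 0 b) (hy : y ∈ Icc 0 b) (hne : m * φ x ≠ φ y)
    (hh : IntervalIntegrable h volume 0 1)
    (hfi : IntervalIntegrable f volume (m * φ x) (φ y)) :
    (φ y - m * φ x)⁻¹ * ∫ u in (m * φ x)..(φ y), f u ≤
      (f (φ y) + m * f (φ x)) * ∫ t in (0 : ℝ)..1, h t := by
  have hc : φ y - m * φ x ≠ 0 := sub_ne_zero.2 hne.symm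
  have hcomp : IntervalIntegrable (fun t => f ((φ y - m * φ x) * t + m * φ x)) volume 0 1 :=
    IntervalIntegrable.comp_mul_add hc (by simpa using hfi)
  have hbound : IntervalIntegrable (fun t => h t * f (φ y) + m * h (1 - t) * f (φ x))
      volume 0 1 :=
    (hh.mul_const _).add ((hh.comp_one_sub_unitInterval.const_mul m).mul_const _)
  calc (φ y - m * φ x)⁻¹ * ∫ u in (m * φ x)..(φ y), f u
      = ∫ t in (0 : ℝ)..1, f ((φ y - m * φ x) * t + m * φ x) := by
        rw [integral_comp_mul_add f hc]; simp
    _ ≤ ∫ t in (0 : ℝ)..1, (h t * f (φ y) + m * h (1 - t) * f (φ x)) :=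
        integral_mono_on_of_le_Ioo zero_le_one hcomp hbound fun t ht => by
          convert hf.2 y hy x hx t ht using 2; ring
    _ = (f (φ y) + m * f (φ x)) * ∫ t in (0 : ℝ)..1, h t :=
        integral_mul_add_mul_comp_one_sub hh m _ _

theorem phiHMConvex_two_interval_ineq_general (b m : ℝ) (h φ f : ℝ → ℝ)
    (hm : m ∈ Set.Ioc (0 : ℝ) 1)
    (hf : PhiHMConvex b m h φ f)
    (x : ℝ) (hx : x ∈ Set.Icc (0 : ℝ) b) (y : ℝ) (hy : y ∈ Set.Icc (0 : ℝ) b)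
    (h1 : m * φ x ≤ φ x) (h3 : m * φ y < φ y)
    (h4 : m * φ x < φ y) (h5 : φ x < m * φ y)
    (hinth : IntervalIntegrable h volume 0 1)
    (hintf : IntervalIntegrable f volume (m * φ x) (φ y)) :
    (1 / (m + 1)) *
        ((1 / (φ y - m * φ x)) * (∫ u in (m * φ x)..(φ y), f u) +
          (1 / (m * φ y - φ x)) * (∫ u in (φ x)..(m * φ y), f u)) ≤
      (f (φ x) + f (φ y)) * ∫ t in (0 : ℝ)..1, h t := by
  have hinner : IntervalIntegrable f volume (φ x) (m * φ y) := by
    refine hintf.mono_set ?_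
    rw [uIcc_of_le h5.le, uIcc_of_le h4.le]
    exact Icc_subset_Icc h1 h3.le
  have hxy := hf.inv_mul_integral_le hx hy h4.ne hinth hintf
  have hyx := hf.inv_mul_integral_le hy hx h5.ne' hinth hinner.symm
  rw [integral_symm, ← neg_sub, inv_neg, neg_mul_neg] at hyx
  have hm1 : 0 < m + 1 := by linarith [hm.1]
  calc (1 / (m + 1)) *
        ((1 / (φ y - m * φ x)) * (∫ u in (m * φ x)..(φ y), f u) +
          (1 / (m * φ y - φ x)) * (∫ u in (φ x)..(m * φ y), f u))
      ≤ (1 / (m + 1)) * ((f (φ y) + m * f (φ x)) * (∫ t in (0 : ℝ)..1, h t) +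
          (f (φ x) + m * f (φ y)) * ∫ t in (0 : ℝ)..1, h t) := by
        simp only [one_div]; gcongr
    _ = (f (φ x) + f (φ y)) * ∫ t in (0 : ℝ)..1, h t := by
        field_simp; ring

theorem phiHMConvex_two_interval_ineq (b m : ℝ) (h φ f : ℝ → ℝ)
    (hb : 0 < b) (hm : m ∈ Set.Ioc (0 : ℝ) 1)
    (hh : ∀ t ∈ Set.Ioo (0 : ℝ) 1, 0 ≤ h t) (hh0 : h ≠ 0)
    (hφ : ∀ x ∈ Set.Icc (0 : ℝ) b, φ x ∈ Set.Icc (0 : ℝ) b)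
    (hf : PhiHMConvex b m h φ f)
    (x : ℝ) (hx : x ∈ Set.Icc (0 : ℝ) b) (y : ℝ) (hy : y ∈ Set.Icc (0 : ℝ) b)
    (h0 : 0 ≤ m * φ x) (h1 : m * φ x ≤ φ x) (h2 : φ x ≤ m * φ y) (h3 : m * φ y < φ y)
    (h4 : m * φ x < φ y) (h5 : φ x < m * φ y)
    (hinth : IntervalIntegrable h volume 0 1)
    (hintf : IntervalIntegrable f volume (m * φ x) (φ y)) :
    (1 / (m + 1)) *
        ((1 / (φ y - m * φ x)) * (∫ u in (m * φ x)..(φ y), f u) +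
          (1 / (m * φ y - φ x)) * (∫ u in (φ x)..(m * φ y), f u)) ≤
      (f (φ x) + f (φ y)) * ∫ t in (0 : ℝ)..1, h t :=
  phiHMConvex_two_interval_ineq_general b m h φ f hm hf x hx y hy h1 h3 h4 h5 hinth hintf
end
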